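/- Let 𝔸 be the block upper triangular matrix [[A_{11}, A_{12}],[0, A_{22}]], let ξ be a right eigenvector of A_{22} with eigenvalue α_2, and suppose α_2 I − A_{11} is invertible. Then the (1,2) block of e^{𝔸δ} applied to ξ satisfies (e^{𝔸δ})_{12} ξ = (α_2 I − A_{11})^{-1}(e^{α_2 δ} I − e^{A_{11} δ}) A_{12} ξ for every δ ≥ 0. -/

import Mathlib

open Matrix NormedSpace

set_option maxHeartbeats 1000000

private lemma pow_mulVec_eigen {I : Type*} [Fintype I] [DecidableEq I] (M : Matrix I I ℝ) (v : I → ℝ) (c : ℝ)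
    (h : M.mulVec v = c • v) (k : ℕ) : (M ^ k).mulVec v = c ^ k • v := by
  induction k with
  | zero => simp
  | succ k ih =>
    rw [pow_succ, ← Matrix.mulVec_mulVec, h, Matrix.mulVec_smul, ih, smul_smul, pow_succ,
      mul_comm]

private lemma exp_mulVec_eigen {I : Type*} [Fintype I] [DecidableEq I] (M : Matrix I I ℝ) (v : I → ℝ) (c : ℝ)
    (h : M.mulVec v = c • v) : (exp M).mulVec v = Real.exp c • v := by
  letI : SeminormedRing (Matrix I I ℝ) := Matrix.linftyOpSemiNormedRing
  letI : NormedRing (Matrix I I ℝ) := Matrix.linftyOpNormedRing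
  letI : NormedAlgebra ℝ (Matrix I I ℝ) := Matrix.linftyOpNormedAlgebra
  let L : Matrix I I ℝ →ₗ[ℝ] (I → ℝ) :=
    { toFun := fun A => A.mulVec v
      map_add' := fun A B => Matrix.add_mulVec A B v
      map_smul' := fun r A => Matrix.smul_mulVec r A v }
  let L' : Matrix I I ℝ →L[ℝ] (I → ℝ) := L.toContinuousLinearMap
  have hs : Summable fun k : ℕ => ((k.factorial : ℝ))⁻¹ • M ^ k := expSeries_summable' (𝕂 := ℝ) M
  have : (exp M).mulVec v = L' (∑' k : ℕ, ((k.factorial : ℝ))⁻¹ • M ^ k) := by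
    rw [exp_eq_tsum ℝ]; rfl
  rw [this, L'.map_tsum hs]
  have heach : ∀ k : ℕ, L' (((k.factorial : ℝ))⁻¹ • M ^ k) = (((k.factorial : ℝ))⁻¹ * c ^ k) • v := by
    intro k
    show (((k.factorial : ℝ))⁻¹ • M ^ k).mulVec v = _
    rw [Matrix.smul_mulVec, pow_mulVec_eigen M v c h, smul_smul]
  simp_rw [heach]
  have hsum : Summable fun k : ℕ => ((k.factorial : ℝ))⁻¹ * c ^ k := by
    simpa [smul_eq_mul] using expSeries_summable' (𝕂 := ℝ) c
  rw [hsum.tsum_smul_const]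
  congr 1
  rw [Real.exp_eq_exp_ℝ, exp_eq_tsum ℝ]
  simp [smul_eq_mul]

private lemma pow_fromBlocks {n m : ℕ} (A : Matrix (Fin n) (Fin n) ℝ)
    (B : Matrix (Fin n) (Fin m) ℝ) (D : Matrix (Fin m) (Fin m) ℝ) (k : ℕ) :
    ∃ C, (fromBlocks A B 0 D) ^ k = fromBlocks (A ^ k) C 0 (D ^ k) := by
  induction k with
  | zero => exact ⟨0, by simp [Matrix.fromBlocks_one]⟩
  | succ k ih =>
    obtain ⟨C, hC⟩ := ih
    refine ⟨A ^ k * B + C * D, ?_⟩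
    rw [pow_succ, hC, Matrix.fromBlocks_multiply]
    simp [pow_succ]

private lemma exp_fromBlocks_blocks {n m : ℕ} (A : Matrix (Fin n) (Fin n) ℝ)
    (B : Matrix (Fin n) (Fin m) ℝ) (D : Matrix (Fin m) (Fin m) ℝ) :
    (exp (fromBlocks A B 0 D)).toBlocks₁₁ = exp A ∧
      (exp (fromBlocks A B 0 D)).toBlocks₂₁ = 0 := by
  letI : SeminormedRing (Matrix (Fin n ⊕ Fin m) (Fin n ⊕ Fin m) ℝ) := Matrix.linftyOpSemiNormedRing
  letI : NormedRing (Matrix (Fin n ⊕ Fin m) (Fin n ⊕ Fin m) ℝ) := Matrix.linftyOpNormedRing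
  letI : NormedAlgebra ℝ (Matrix (Fin n ⊕ Fin m) (Fin n ⊕ Fin m) ℝ) := Matrix.linftyOpNormedAlgebra
  let L1 : Matrix (Fin n ⊕ Fin m) (Fin n ⊕ Fin m) ℝ →ₗ[ℝ] Matrix (Fin n) (Fin n) ℝ :=
    { toFun := Matrix.toBlocks₁₁
      map_add' := fun X Y => by ext i j; simp [Matrix.toBlocks₁₁]
      map_smul' := fun r X => by ext i j; simp [Matrix.toBlocks₁₁] }
  let L2 : Matrix (Fin n ⊕ Fin m) (Fin n ⊕ Fin m) ℝ →ₗ[ℝ] Matrix (Fin m) (Fin n) ℝ :=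
    { toFun := Matrix.toBlocks₂₁
      map_add' := fun X Y => by ext i j; simp [Matrix.toBlocks₂₁]
      map_smul' := fun r X => by ext i j; simp [Matrix.toBlocks₂₁] }
  have hs : Summable fun k : ℕ => ((k.factorial : ℝ))⁻¹ • (fromBlocks A B 0 D) ^ k :=
    expSeries_summable' (𝕂 := ℝ) _
  constructor
  · have : (exp (fromBlocks A B 0 D)).toBlocks₁₁ =
        L1.toContinuousLinearMap (∑' k : ℕ, ((k.factorial : ℝ))⁻¹ • (fromBlocks A B 0 D) ^ k) := by
      rw [exp_eq_tsum ℝ]; rfl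
    rw [this, L1.toContinuousLinearMap.map_tsum hs, exp_eq_tsum ℝ]
    congr 1
    funext k
    obtain ⟨C, hC⟩ := pow_fromBlocks A B D k
    show Matrix.toBlocks₁₁ (((k.factorial : ℝ))⁻¹ • (fromBlocks A B 0 D) ^ k) = _
    rw [hC]
    ext i j
    simp [Matrix.toBlocks₁₁, Matrix.fromBlocks]
  · have : (exp (fromBlocks A B 0 D)).toBlocks₂₁ =
        L2.toContinuousLinearMap (∑' k : ℕ, ((k.factorial : ℝ))⁻¹ • (fromBlocks A B 0 D) ^ k) := by
      rw [exp_eq_tsum ℝ]; rfl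
    rw [this, L2.toContinuousLinearMap.map_tsum hs]
    have heach : ∀ k : ℕ, L2.toContinuousLinearMap (((k.factorial : ℝ))⁻¹ • (fromBlocks A B 0 D) ^ k)
        = 0 := by
      intro k
      obtain ⟨C, hC⟩ := pow_fromBlocks A B D k
      show Matrix.toBlocks₂₁ (((k.factorial : ℝ))⁻¹ • (fromBlocks A B 0 D) ^ k) = 0
      rw [hC]
      ext i j
      simp [Matrix.toBlocks₂₁, Matrix.fromBlocks]
    simp_rw [heach]
    exact tsum_zero

theorem exp_block_upper_triangular_offdiag_apply (n m : ℕ)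
    (A₁₁ : Matrix (Fin n) (Fin n) ℝ) (A₁₂ : Matrix (Fin n) (Fin m) ℝ)
    (A₂₂ : Matrix (Fin m) (Fin m) ℝ) (ξ : Fin m → ℝ) (α₂ : ℝ)
    (hξ : A₂₂.mulVec ξ = α₂ • ξ)
    (hinv : IsUnit (α₂ • (1 : Matrix (Fin n) (Fin n) ℝ) - A₁₁)) (δ : ℝ) (hδ : 0 ≤ δ) :
    (Matrix.toBlocks₁₂ (NormedSpace.exp (δ • Matrix.fromBlocks A₁₁ A₁₂ 0 A₂₂))).mulVec ξ =
      ((α₂ • (1 : Matrix (Fin n) (Fin n) ℝ) - A₁₁)⁻¹ *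
        (Real.exp (α₂ * δ) • (1 : Matrix (Fin n) (Fin n) ℝ) - NormedSpace.exp (δ • A₁₁)) *
        A₁₂).mulVec ξ := by
  set B := α₂ • (1 : Matrix (Fin n) (Fin n) ℝ) - A₁₁ with hBdef
  have hdet : IsUnit B.det := (Matrix.isUnit_iff_isUnit_det B).mp hinv
  set u : Fin n → ℝ := B⁻¹.mulVec (A₁₂.mulVec ξ) with hu
  have hBu : B.mulVec u = A₁₂.mulVec ξ := by
    rw [hu, Matrix.mulVec_mulVec, Matrix.mul_nonsing_inv B hdet, Matrix.one_mulVec]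
  set 𝔸 := Matrix.fromBlocks A₁₁ A₁₂ 0 A₂₂ with h𝔸
  set w : Fin n ⊕ Fin m → ℝ := Sum.elim u ξ with hw
  have heig : 𝔸.mulVec w = α₂ • w := by
    rw [h𝔸, hw, Matrix.fromBlocks_mulVec]
    have h1 : A₁₁.mulVec u + A₁₂.mulVec ξ = α₂ • u := by
      rw [← hBu, ← Matrix.add_mulVec]
      have : A₁₁ + B = α₂ • 1 := by rw [hBdef]; abel
      rw [this, Matrix.smul_mulVec, Matrix.one_mulVec]
    funext i
    cases i with
    | inl i => simp [h1]
    | inr i => simp [hξ]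
  have heig' : (δ • 𝔸).mulVec w = (α₂ * δ) • w := by
    rw [Matrix.smul_mulVec, heig, smul_smul, mul_comm]
  have hexp : (exp (δ • 𝔸)).mulVec w = Real.exp (α₂ * δ) • w :=
    exp_mulVec_eigen _ _ _ heig'
  have hblocks : δ • 𝔸 = Matrix.fromBlocks (δ • A₁₁) (δ • A₁₂) 0 (δ • A₂₂) := by
    rw [h𝔸, Matrix.fromBlocks_smul, smul_zero]
  have hb := exp_fromBlocks_blocks (δ • A₁₁) (δ • A₁₂) (δ • A₂₂)
  rw [← hblocks] at hb
  obtain ⟨hb11, hb21⟩ := hb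
  set E := exp (δ • 𝔸) with hE
  have hEdecomp : E = Matrix.fromBlocks (exp (δ • A₁₁)) E.toBlocks₁₂ 0 E.toBlocks₂₂ := by
    conv_lhs => rw [← Matrix.fromBlocks_toBlocks E]
    rw [hb11, hb21]
  have hfirst : (exp (δ • A₁₁)).mulVec u + E.toBlocks₁₂.mulVec ξ = Real.exp (α₂ * δ) • u := by
    have h := hexp
    rw [← Matrix.fromBlocks_toBlocks E, Matrix.fromBlocks_mulVec, hb11, hb21] at h
    funext i
    have h2 := congrFun h (Sum.inl i)
    simpa [hw] using h2
  have hkey : E.toBlocks₁₂.mulVec ξ =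
      (Real.exp (α₂ * δ) • (1 : Matrix (Fin n) (Fin n) ℝ) - exp (δ • A₁₁)).mulVec u := by
    rw [Matrix.sub_mulVec, Matrix.smul_mulVec, Matrix.one_mulVec]
    rw [← hfirst]
    abel
  -- commutation
  have hcomm : exp (δ • A₁₁) * B = B * exp (δ • A₁₁) := by
    have h1 : Commute (δ • A₁₁) A₁₁ := (Commute.refl A₁₁).smul_left δ
    have h2 : Commute (exp (δ • A₁₁)) A₁₁ := h1.exp_left
    have h3 : Commute (exp (δ • A₁₁)) B := by
      rw [hBdef]
      exact (Commute.smul_right (Commute.one_right _) α₂).sub_right h2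
    exact h3.eq
  set X := Real.exp (α₂ * δ) • (1 : Matrix (Fin n) (Fin n) ℝ) - exp (δ • A₁₁) with hX
  have hXcomm : X * B = B * X := by
    have c1 : Commute (exp (δ • A₁₁)) B := hcomm
    exact (((Commute.one_left B).smul_left (Real.exp (α₂ * δ))).sub_left c1).eq
  have hinvcomm : B⁻¹ * X = X * B⁻¹ := by
    calc B⁻¹ * X = B⁻¹ * X * (B * B⁻¹) := by rw [Matrix.mul_nonsing_inv B hdet, Matrix.mul_one]
    _ = B⁻¹ * (X * B) * B⁻¹ := by noncomm_ring
    _ = B⁻¹ * (B * X) * B⁻¹ := by rw [hXcomm]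
    _ = (B⁻¹ * B) * (X * B⁻¹) := by noncomm_ring
    _ = X * B⁻¹ := by rw [Matrix.nonsing_inv_mul B hdet, Matrix.one_mul]
  rw [hinvcomm]
  rw [Matrix.mul_assoc, ← Matrix.mulVec_mulVec, ← Matrix.mulVec_mulVec, ← hu, ← hkey]
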